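/- Define ψ : ℝ⁴ → ℝ⁴, in coordinates (x̄, ȳ, p̄, z̄) ↦ (x, y, p, z), by x = (1/2) z̄, y = (1/2)(z̄ x̄ − p̄), p = x̄, z = (1/2) z̄ x̄² − p̄ x̄ + ȳ. Then the pullbacks under ψ of the 1-forms associated with the Monge equation z' = (y')² satisfy, at every point (x̄,ȳ,p̄,z̄) ∈ ℝ⁴ and for every vector v ∈ ℝ⁴: (dz − p² dx)|_{ψ(m)}(Dψ(m)·v) = (dȳ − p̄ dx̄)_m(v) − x̄ · (dp̄ − z̄ dx̄)_m(v), and (dy − p dx)|_{ψ(m)}(Dψ(m)·v) = −(1/2) (dp̄ − z̄ dx̄)_m(v). -/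

import Mathlib

noncomputable section

/-- `ℝ⁴`, source coordinates `(x̄, ȳ, p̄, z̄)`, target coordinates `(x, y, p, z)`. -/
abbrev J4 : Type := ℝ × ℝ × ℝ × ℝ

/-- The coordinate change `x = z̄/2`, `y = (z̄x̄ − p̄)/2`, `p = x̄`,
`z = z̄x̄²/2 − p̄x̄ + ȳ` exhibiting integral-free solutions of `z' = (y')²`. -/
def ψMonge (m : J4) : J4 :=
  ((1/2) * m.2.2.2,
   (1/2) * (m.2.2.2 * m.1 - m.2.2.1),
   m.1,
   (1/2) * m.2.2.2 * m.1^2 - m.2.2.1 * m.1 + m.2.1)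

open ContinuousLinearMap in
theorem fderiv_ψMonge_apply (m v : J4) : fderiv ℝ ψMonge m v =
    ((1/2) * v.2.2.2,
     (1/2) * (v.2.2.2 * m.1 + m.2.2.2 * v.1 - v.2.2.1),
     v.1,
     (1/2) * v.2.2.2 * m.1^2 + m.2.2.2 * m.1 * v.1 - v.2.2.1 * m.1 - m.2.2.1 * v.1 + v.2.1) := by
  unfold ψMonge
  simp (disch := fun_prop) only [DifferentiableAt.fderiv_prodMk, fderiv_fun_mul, fderiv_fun_sub,
    fderiv_fun_add, fderiv_fun_pow, fderiv.snd, fderiv.fst, fderiv_fun_id, fderiv_fun_const,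
    prod_apply, comp_id, comp_apply, coe_fst', coe_snd', add_apply, sub_apply, smul_apply,
    smul_eq_mul, Pi.zero_apply, zero_apply, Nat.add_one_sub_one, pow_one, nsmul_eq_mul,
    Nat.cast_ofNat]
  ext <;> ring

/-- Pullback identities: `ψ*(dz − p² dx) = (dȳ − p̄ dx̄) − x̄ (dp̄ − z̄ dx̄)` and
`ψ*(dy − p dx) = −(1/2)(dp̄ − z̄ dx̄)` at every point and on every vector. -/
theorem pullback_forms_hilbert_example :
    ∀ (m v : J4),
      ((fderiv ℝ ψMonge m v).2.2.2 -
          ((ψMonge m).2.2.1)^2 * (fderiv ℝ ψMonge m v).1 =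
        (v.2.1 - m.2.2.1 * v.1) - m.1 * (v.2.2.1 - m.2.2.2 * v.1)) ∧
      ((fderiv ℝ ψMonge m v).2.1 -
          (ψMonge m).2.2.1 * (fderiv ℝ ψMonge m v).1 =
        -(1/2) * (v.2.2.1 - m.2.2.2 * v.1)) := by
  intro m v
  rw [fderiv_ψMonge_apply]
  constructor <;> simp only [ψMonge] <;> ring
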